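/- Under the mod-3 coloring, if the sign of one step of a walk is known and all step colors are given, and each pair of consecutive steps satisfies the color-transition relations, then the signs of all steps in the walk are uniquely determined, provided at least two distinct colors occur among consecutive steps so that an initial sign can be inferred. -/
import Mathlib


/-- Under the mod-3 color-transition relations, the signs of the
steps of a walk are uniquely determined by the color sequence once one sign is
known: two sign sequences consistent with the same color sequence that agree at
one index are equal; moreover if two consecutive colors differ, the sign of the
second of those steps is determined by the colors alone. -/
theorem stmt13 (L : ℕ) (c : ℕ → ZMod 3)
    (Consistent : (ℕ → Bool) → Prop)
    (hCons : ∀ s : ℕ → Bool, Consistent s ↔ ∀ i, i + 1 < L →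
      ((s i = true ∧ s (i + 1) = true) → c (i + 1) = c i + 1) ∧
      (s i ≠ s (i + 1) → c (i + 1) = c i) ∧
      ((s i = false ∧ s (i + 1) = false) → c (i + 1) = c i - 1)) :
    (∀ s s' : ℕ → Bool, Consistent s → Consistent s' →
      (∃ i₀ < L, s i₀ = s' i₀) → ∀ i < L, s i = s' i) ∧
    (∀ s : ℕ → Bool, Consistent s → ∀ i, i + 1 < L → c (i + 1) ≠ c i →
      (s (i + 1) = true ↔ c (i + 1) = c i + 1)) := by
  have f1 : ∀ x : ZMod 3, x + 1 ≠ x := by decide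
  have f2 : ∀ x : ZMod 3, x - 1 ≠ x := by decide
  have f3 : ∀ x : ZMod 3, x + 1 ≠ x - 1 := by decide
  have part2 : ∀ s : ℕ → Bool, (∀ i, i + 1 < L →
      ((s i = true ∧ s (i + 1) = true) → c (i + 1) = c i + 1) ∧
      (s i ≠ s (i + 1) → c (i + 1) = c i) ∧
      ((s i = false ∧ s (i + 1) = false) → c (i + 1) = c i - 1)) →
      ∀ i, i + 1 < L → c (i + 1) ≠ c i →
      (s (i + 1) = true ↔ c (i + 1) = c i + 1) := by
    intro s hs i hi hc
    obtain ⟨h1, h2, h3⟩ := hs i hi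
    have eqi : s i = s (i + 1) := not_ne_iff.mp (fun hne => hc (h2 hne))
    constructor
    · intro ht; exact h1 ⟨eqi.trans ht, ht⟩
    · intro hcc
      by_contra hf
      have hft : s (i + 1) = false := by simpa using hf
      have h4 := h3 ⟨eqi.trans hft, hft⟩
      rw [h4] at hcc
      exact f3 (c i) hcc.symm
  constructor
  · intro s s' hs hs' ⟨i₀, hi₀, h₀⟩ i hi
    rw [hCons] at hs hs'
    have key : ∀ j, j + 1 < L → (s j = s' j ↔ s (j + 1) = s' (j + 1)) := by
      intro j hj
      obtain ⟨h1, h2, h3⟩ := hs j hj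
      obtain ⟨h1', h2', h3'⟩ := hs' j hj
      by_cases hc : c (j + 1) = c j
      · have a : s (j + 1) = !s j := by
          rcases Bool.eq_false_or_eq_true (s j) with hj0 | hj0 <;>
            rcases Bool.eq_false_or_eq_true (s (j + 1)) with hj1 | hj1 <;>
            simp [hj0, hj1]
          · have := h1 ⟨hj0, hj1⟩; rw [this] at hc; exact f1 _ hc
          · have := h3 ⟨hj0, hj1⟩; rw [this] at hc; exact f2 _ hc
        have a' : s' (j + 1) = !s' j := by
          rcases Bool.eq_false_or_eq_true (s' j) with hj0 | hj0 <;>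
            rcases Bool.eq_false_or_eq_true (s' (j + 1)) with hj1 | hj1 <;>
            simp [hj0, hj1]
          · have := h1' ⟨hj0, hj1⟩; rw [this] at hc; exact f1 _ hc
          · have := h3' ⟨hj0, hj1⟩; rw [this] at hc; exact f2 _ hc
        constructor
        · intro h; rw [a, a', h]
        · intro h; rw [a, a'] at h
          exact Bool.not_inj h
      · have eqj : s j = s (j + 1) := not_ne_iff.mp (fun hne => hc (h2 hne))
        have eqj' : s' j = s' (j + 1) := not_ne_iff.mp (fun hne => hc (h2' hne))
        have d : (s (j + 1) = true) ↔ (s' (j + 1) = true) :=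
          (part2 s hs j hj hc).trans (part2 s' hs' j hj hc).symm
        have e : s (j + 1) = s' (j + 1) := by
          rw [Bool.eq_iff_iff]; exact d
        exact iff_of_true (eqj.trans (e.trans eqj'.symm)) e
    have fwd : ∀ n, i₀ + n < L → s (i₀ + n) = s' (i₀ + n) := by
      intro n
      induction n with
      | zero => intro _; simpa using h₀
      | succ n ih =>
        intro h
        have hj : i₀ + n + 1 < L := by omega
        exact (key (i₀ + n) hj).mp (ih (by omega))
    have bwd : ∀ n, n ≤ i₀ → s (i₀ - n) = s' (i₀ - n) := by
      intro n
      induction n with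
      | zero => intro _; simpa using h₀
      | succ n ih =>
        intro h
        have h1 : i₀ - (n + 1) + 1 = i₀ - n := by omega
        have h2 : i₀ - (n + 1) + 1 < L := by omega
        exact (key (i₀ - (n + 1)) h2).mpr (by rw [h1]; exact ih (by omega))
    rcases le_or_gt i₀ i with h | h
    · have e : i₀ + (i - i₀) = i := by omega
      rw [← e]; exact fwd _ (by omega)
    · have e : i₀ - (i₀ - i) = i := by omega
      rw [← e]; exact bwd _ (by omega)
  · intro s hs
    exact part2 s ((hCons s).mp hs)
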